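/- Let K = ℚ(α) be a real quadratic field with discriminant D. Then H(α) ≥ (1/√5)·√D. -/

import Mathlib

/-!
For `a ≠ 0` the element `ω = a α` is an algebraic integer, a root of `X² + b X + a c`, and `1, ω`
is a `ℚ`-basis of `K` whose discriminant is computed from traces to be `b² - 4ac`. Writing this
basis in an integral basis of `𝓞 K` gives `b² - 4ac = d² D` for a nonzero integer `d`, hence
`D ≤ |b² - 4ac| ≤ 5 H(α)²`.
-/

open NumberField IntermediateField

theorem IntermediateField.notMem_bot_of_adjoin_simple_eq_top {F E : Type*} [Field F] [Field E]
    [Algebra F E] {α : E} (hα : F⟮α⟯ = ⊤) (hrank : Module.finrank F E ≠ 1) :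
    α ∉ (⊥ : IntermediateField F E) := fun hbot =>
  hrank <| bot_eq_top_iff_finrank_eq_one.mp <| (adjoin_simple_eq_bot_iff.mpr hbot).symm.trans hα

theorem linearIndependent_one_of_notMem_range {F A : Type*} [Field F] [Ring A] [Nontrivial A]
    [Algebra F A] {x : A} (hx : x ∉ Set.range (algebraMap F A)) :
    LinearIndependent F ![1, x] := by
  rw [LinearIndependent.pair_symm_iff, linearIndependent_fin2]
  refine ⟨one_ne_zero, fun q hq => hx ⟨q, ?_⟩⟩
  simpa [Algebra.algebraMap_eq_smul_one] using hq

theorem isIntegral_mul_of_quadratic {R A : Type*} [CommRing R] [CommRing A] [Algebra R A]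
    {a b c : R} {x : A}
    (h : algebraMap R A a * x ^ 2 + algebraMap R A b * x + algebraMap R A c = 0) :
    IsIntegral R (algebraMap R A a * x) := by
  refine ⟨.X ^ 2 + .C b * .X + .C (a * c), by monicity!, ?_⟩
  simp only [Polynomial.eval₂_add, Polynomial.eval₂_mul, Polynomial.eval₂_pow,
    Polynomial.eval₂_X, Polynomial.eval₂_C, map_mul]
  linear_combination algebraMap R A a * h

section

variable {F A : Type*} [Field F] [CommRing A] [Algebra F A]

theorem Algebra.trace_of_quadratic_basis {V : Module.Basis (Fin 2) F A} {ω : A} (hV : ⇑V = ![1, ω])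
    {p q : F} (hω : ω ^ 2 + algebraMap F A p * ω + algebraMap F A q = 0) :
    Algebra.trace F A ω = -p := by
  have hV0 : V 0 = 1 := by simp [hV]
  have hV1 : V 1 = ω := by simp [hV]
  have hsq : ω * V 1 = (-q) • V 0 + (-p) • V 1 := by
    rw [hV0, hV1, Algebra.smul_def, Algebra.smul_def]
    simp only [map_neg]
    linear_combination hω
  have hone : ω * V 0 = V 1 := by rw [hV0, hV1, mul_one]
  rw [Algebra.trace_eq_matrix_trace V, Matrix.trace_fin_two, Algebra.leftMulMatrix_eq_repr_mul,
    Algebra.leftMulMatrix_eq_repr_mul, hone, hsq]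
  simp

theorem Algebra.discr_of_quadratic_basis {V : Module.Basis (Fin 2) F A} {ω : A} (hV : ⇑V = ![1, ω])
    {p q : F} (hω : ω ^ 2 + algebraMap F A p * ω + algebraMap F A q = 0) :
    Algebra.discr F V = p ^ 2 - 4 * q := by
  have htr1 : Algebra.trace F A 1 = 2 := by
    rw [← map_one (algebraMap F A), Algebra.trace_algebraMap, Module.finrank_eq_card_basis V]
    norm_num
  have htr : Algebra.trace F A ω = -p := trace_of_quadratic_basis hV hω
  have htr2 : Algebra.trace F A (ω * ω) = p ^ 2 - 2 * q := by
    rw [← sq, show ω ^ 2 = algebraMap F A (-q) + (-p) • ω by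
      rw [Algebra.smul_def]; simp only [map_neg]; linear_combination hω]
    rw [map_add, map_smul, Algebra.trace_algebraMap, htr, Module.finrank_eq_card_basis V]
    simp only [Fintype.card_fin, nsmul_eq_mul, smul_eq_mul, Nat.cast_ofNat]
    ring
  rw [Algebra.discr_def, Matrix.det_fin_two]
  simp only [Algebra.traceMatrix_apply, Algebra.traceForm_apply, hV, Matrix.cons_val_zero,
    Matrix.cons_val_one, one_mul, mul_one, htr1, htr, htr2]
  ring

end

theorem NumberField.exists_discr_eq_sq_mul_discr {K : Type*} [Field K] [NumberField K]
    {ι : Type*} [Fintype ι] [DecidableEq ι] (V : Module.Basis ι ℚ K)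
    (hV : ∀ i, IsIntegral ℤ (V i)) :
    ∃ d : ℤ, d ≠ 0 ∧ Algebra.discr ℚ V = d ^ 2 * discr K := by
  let B := (integralBasis K).reindex ((integralBasis K).indexEquiv V)
  have hentries : ∀ i j, IsIntegral ℤ (B.toMatrix V i j) := by
    intro i j
    obtain ⟨x, hx⟩ : ∃ x : 𝓞 K, algebraMap (𝓞 K) K x = V j := ⟨⟨V j, hV j⟩, rfl⟩
    rw [Module.Basis.toMatrix_apply, Module.Basis.repr_reindex_apply, ← hx,
      integralBasis_repr_apply]
    exact isIntegral_algebraMap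
  obtain ⟨d, hd⟩ := IsIntegrallyClosed.isIntegral_iff.mp (IsIntegral.det hentries)
  have hdiscr : Algebra.discr ℚ V = d ^ 2 * discr K := by
    rw [← B.toMatrix_map_vecMul V, Algebra.discr_of_matrix_vecMul, ← hd, coe_discr,
      Module.Basis.coe_reindex, Algebra.discr_reindex]
    simp
  refine ⟨d, fun hd0 => Algebra.discr_not_zero_of_basis ℚ V ?_, hdiscr⟩
  simp [hdiscr, hd0]

theorem NumberField.exists_sq_sub_four_mul_eq_sq_mul_discr {K : Type*} [Field K] [NumberField K]
    (hdeg : Module.finrank ℚ K = 2) {α : K} (hli : LinearIndependent ℚ ![1, α]) {a b c : ℤ}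
    (ha : a ≠ 0) (hroot : (a : K) * α ^ 2 + (b : K) * α + (c : K) = 0) :
    ∃ d : ℤ, d ≠ 0 ∧ b ^ 2 - 4 * a * c = d ^ 2 * discr K := by
  set ω := (a : K) * α
  have hω : ω ^ 2 + algebraMap ℚ K b * ω + algebraMap ℚ K (a * c) = 0 := by
    simp only [map_intCast, ← Int.cast_mul]
    push_cast
    linear_combination (a : K) * hroot
  have hωint : IsIntegral ℤ ω := isIntegral_mul_of_quadratic (by simpa using hroot)
  have hliω : LinearIndependent ℚ ![1, ω] := by
    have := (LinearIndependent.pair_smul_smul_iff isUnit_one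
      (isUnit_iff_ne_zero.mpr (Int.cast_ne_zero.mpr ha : (a : ℚ) ≠ 0))).mpr hli
    simpa [Rat.smul_def, ω] using this
  let V := basisOfLinearIndependentOfCardEqFinrank hliω (by simp [hdeg])
  have hV : ⇑V = ![1, ω] := coe_basisOfLinearIndependentOfCardEqFinrank _ _
  obtain ⟨d, hd, hdiscr⟩ := exists_discr_eq_sq_mul_discr V (by
    rw [hV]; intro i; fin_cases i; exacts [isIntegral_one, hωint])
  refine ⟨d, hd, ?_⟩
  have := (Algebra.discr_of_quadratic_basis hV hω).symm.trans hdiscr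
  rw [mul_assoc]
  exact_mod_cast this

theorem abs_sq_sub_four_mul_le {R : Type*} [CommRing R] [LinearOrder R] [IsStrictOrderedRing R]
    (a b c : R) : |b ^ 2 - 4 * a * c| ≤ 5 * max |a| (max |b| |c|) ^ 2 := by
  set H := max |a| (max |b| |c|)
  have ha : |a| ≤ H := le_max_left _ _
  have hb : |b| ≤ H := (le_max_left _ _).trans (le_max_right _ _)
  have hc : |c| ≤ H := (le_max_right _ _).trans (le_max_right _ _)
  calc |b ^ 2 - 4 * a * c| ≤ |b ^ 2| + |4 * a * c| := abs_sub _ _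
    _ = |b| ^ 2 + 4 * (|a| * |c|) := by simp [abs_mul, mul_assoc]
    _ ≤ H ^ 2 + 4 * (H * H) := by gcongr
    _ = 5 * H ^ 2 := by ring

theorem one_div_sqrt_five_mul_sqrt_le {x y : ℝ} (hy : 0 ≤ y) (h : x ≤ 5 * y ^ 2) :
    1 / √5 * √x ≤ y := by
  rw [one_div_mul_eq_div, div_le_iff₀ (by positivity)]
  calc √x ≤ √(5 * y ^ 2) := Real.sqrt_le_sqrt h
    _ = y * √5 := by rw [Real.sqrt_mul (by norm_num), Real.sqrt_sq hy, mul_comm]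

theorem small_generators_real_quadratic_lower_bound
    (K : Type*) [Field K] [NumberField K]
    (hdeg : Module.finrank ℚ K = 2)
    (α : K) (hgen : ℚ⟮α⟯ = ⊤)
    (a b c : ℤ)
    (hroot : (a : K) * α ^ 2 + (b : K) * α + (c : K) = 0)
    (hgcd : Int.gcd (Int.gcd a b) c = 1) :
    ((max |a| (max |b| |c|) : ℤ) : ℝ) ≥
      (1 / Real.sqrt 5) * Real.sqrt (NumberField.discr K : ℝ) := by
  have hα : α ∉ (⊥ : IntermediateField ℚ K) := notMem_bot_of_adjoin_simple_eq_top hgen (by omega)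
  have hli : LinearIndependent ℚ ![1, α] :=
    linearIndependent_one_of_notMem_range (by rwa [← IntermediateField.mem_bot])
  have ha : a ≠ 0 := by
    rintro rfl
    obtain ⟨hc, hb⟩ := LinearIndependent.pair_iff.mp hli c b (by
      simp only [Int.cast_zero, zero_mul, zero_add] at hroot
      simpa [Rat.smul_def, add_comm] using hroot)
    rw [Int.cast_eq_zero] at hb hc
    simp [hb, hc] at hgcd
  obtain ⟨d, hd, hbac⟩ := exists_sq_sub_four_mul_eq_sq_mul_discr hdeg hli ha hroot
  have hdiscr_le : |discr K| ≤ |b ^ 2 - 4 * a * c| := by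
    rw [hbac, abs_mul]
    exact le_mul_of_one_le_left (abs_nonneg _) (by simpa using Int.one_le_abs (pow_ne_zero 2 hd))
  apply one_div_sqrt_five_mul_sqrt_le (by positivity)
  exact_mod_cast (le_abs_self _).trans (hdiscr_le.trans (abs_sq_sub_four_mul_le a b c))
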